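/- Let n ≥ 1 and let u_0,…,u_n : D → ℝ be twice continuously differentiable functions on D = ℂ∖(−∞,0] with u_j + u_{n−j} = 0 for all j. For λ ∈ ℂ with |λ| = 1 and z ∈ D define (n+1)×(n+1) complex matrices P(λ,z) = diag((u_0)_z,…,(u_n)_z) + λ^{−1} z^{−1} C(z) and Q(λ,z) = λ z̄^{−1} F(z), where C(z) has entry z in position (0,n), entries 1 in positions (j,j−1) for 1 ≤ j ≤ n, and zeros elsewhere, and F(z) has entries e^{u_{j+1}−u_j} in positions (j,j+1) for 0 ≤ j ≤ n−1, entry z̄·e^{u_0−u_n} in position (n,0), and zeros elsewhere. Then the zero-curvature equation ∂_z Q − ∂_{z̄} P + PQ − QP = 0 holds on D for every λ with |λ| = 1 if and only if on D: (u_0)_{zz̄} = e^{u_0−u_n} − |z|^{−2} e^{u_1−u_0}; (u_j)_{zz̄} = |z|^{−2} e^{u_j−u_{j−1}} − |z|^{−2} e^{u_{j+1}−u_j} for 1 ≤ j ≤ n−1; and (u_n)_{zz̄} = |z|^{−2} e^{u_n−u_{n−1}} − e^{u_0−u_n}. -/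

import Mathlib

open scoped BigOperators

/-- The Wirtinger derivative `f_z = ½(∂f/∂x − i ∂f/∂y)`. -/
noncomputable def wirtingerDz (f : ℂ → ℂ) (z : ℂ) : ℂ :=
  (fderiv ℝ f z 1 - Complex.I * fderiv ℝ f z Complex.I) / 2

/-- The Wirtinger derivative `f_z̄ = ½(∂f/∂x + i ∂f/∂y)`. -/
noncomputable def wirtingerDzbar (f : ℂ → ℂ) (z : ℂ) : ℂ :=
  (fderiv ℝ f z 1 + Complex.I * fderiv ℝ f z Complex.I) / 2

/-- `u_{zz̄}` for a real-valued function `u`. -/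
noncomputable def uzzbar (u : ℂ → ℝ) (z : ℂ) : ℂ :=
  wirtingerDzbar (fun w => wirtingerDz (fun x => ((u x : ℝ) : ℂ)) w) z

/-- The matrix `C(z)`: entry `z` in position `(0,n)`, entries `1` in positions
`(j,j−1)` for `1 ≤ j ≤ n`, zeros elsewhere. -/
def Cmat (n : ℕ) (z : ℂ) : Matrix (Fin (n + 1)) (Fin (n + 1)) ℂ :=
  Matrix.of fun i j =>
    if (i : ℕ) = 0 ∧ (j : ℕ) = n then z
    else if (i : ℕ) = (j : ℕ) + 1 then 1 else 0

/-- The matrix `F(z)`: entries `e^{u_{j+1}−u_j}` in positions `(j,j+1)` for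
`0 ≤ j ≤ n−1`, entry `z̄·e^{u_0−u_n}` in position `(n,0)`, zeros elsewhere. -/
noncomputable def Fmat (n : ℕ) (u : Fin (n + 1) → ℂ → ℝ) (z : ℂ) :
    Matrix (Fin (n + 1)) (Fin (n + 1)) ℂ :=
  Matrix.of fun i j =>
    if (j : ℕ) = (i : ℕ) + 1 then (Real.exp (u j z - u i z) : ℂ)
    else if (i : ℕ) = n ∧ (j : ℕ) = 0 then
      (starRingEnd ℂ z) * (Real.exp (u 0 z - u (Fin.last n) z) : ℂ)
    else 0

/-- `P(λ,z) = diag((u_0)_z,…,(u_n)_z) + λ⁻¹ z⁻¹ C(z)`. -/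
noncomputable def Pmat (n : ℕ) (u : Fin (n + 1) → ℂ → ℝ) (lam z : ℂ) :
    Matrix (Fin (n + 1)) (Fin (n + 1)) ℂ :=
  Matrix.diagonal (fun j => wirtingerDz (fun w => ((u j w : ℝ) : ℂ)) z)
    + (lam⁻¹ * z⁻¹) • Cmat n z

/-- `Q(λ,z) = λ z̄⁻¹ F(z)`. -/
noncomputable def Qmat (n : ℕ) (u : Fin (n + 1) → ℂ → ℝ) (lam z : ℂ) :
    Matrix (Fin (n + 1)) (Fin (n + 1)) ℂ :=
  (lam * (starRingEnd ℂ z)⁻¹) • Fmat n u z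

/-!
In the `ℤ_{n+1}`-symmetric frame, `C` and `F` are weighted cyclic shifts in opposite directions,
so `[C, F]` is diagonal. Write `P = D + λ⁻¹z⁻¹C` with `D = diag((u_j)_z)` and `Q = λz̄⁻¹F`.
Away from the exponentials `e^{u_{j+1} - u_j}`, the entries of `Q` depend antiholomorphically on
`z`, so `∂_z Q` cancels `[D, Q]`; `z⁻¹C` is holomorphic, so `∂_{z̄} P = diag((u_j)_{zz̄})`; and
`λ` cancels in `[λ⁻¹z⁻¹C, λz̄⁻¹F] = |z|⁻²[C, F]`. Hence for every `λ ≠ 0` the curvature is the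
diagonal matrix `|z|⁻²[C, F] - diag((u_j)_{zz̄})`, and its diagonal entries are the tt*-Toda
equations.
-/

open ComplexConjugate

section Wirtinger

variable {f g : ℂ → ℂ} {z : ℂ}

theorem wirtingerDz_const (c : ℂ) : wirtingerDz (fun _ => c) z = 0 := by
  simp [wirtingerDz]

theorem wirtingerDz_sub (hf : DifferentiableAt ℝ f z) (hg : DifferentiableAt ℝ g z) :
    wirtingerDz (fun w => f w - g w) z = wirtingerDz f z - wirtingerDz g z := by
  simp only [wirtingerDz, fderiv_fun_sub hf hg, sub_apply]
  ring

theorem wirtingerDz_mul (hf : DifferentiableAt ℝ f z) (hg : DifferentiableAt ℝ g z) :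
    wirtingerDz (fun w => f w * g w) z = wirtingerDz f z * g z + f z * wirtingerDz g z := by
  simp only [wirtingerDz, fderiv_fun_mul hf hg, add_apply, smul_apply, smul_eq_mul]
  ring

theorem fderiv_real_apply_eq_mul_deriv (hf : DifferentiableAt ℂ f z) (v : ℂ) :
    fderiv ℝ f z v = v * deriv f z := by
  simp [(hf.hasDerivAt.hasFDerivAt.restrictScalars ℝ).fderiv]

theorem wirtingerDzbar_eq_zero (hf : DifferentiableAt ℂ f z) : wirtingerDzbar f z = 0 := by
  simp only [wirtingerDzbar, fderiv_real_apply_eq_mul_deriv hf]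
  linear_combination (deriv f z / 2) * Complex.I_mul_I

theorem wirtingerDz_conj_comp (hf : DifferentiableAt ℂ f z) :
    wirtingerDz (fun w => conj (f w)) z = 0 := by
  have hd : HasFDerivAt (fun w => conj (f w)) _ z :=
    Complex.conjCLE.hasFDerivAt.comp z (hf.restrictScalars ℝ).hasFDerivAt
  simp only [wirtingerDz, hd.fderiv, ContinuousLinearMap.coe_comp, ContinuousLinearEquiv.coe_coe,
    Function.comp_apply, Complex.conjCLE_apply, fderiv_real_apply_eq_mul_deriv hf, map_mul,
    Complex.conj_I, map_one]
  linear_combination (conj (deriv f z) / 2) * Complex.I_mul_I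

theorem wirtingerDz_comp (hg : DifferentiableAt ℂ g (f z)) (hf : DifferentiableAt ℝ f z) :
    wirtingerDz (fun w => g (f w)) z = deriv g (f z) * wirtingerDz f z := by
  have hd : HasFDerivAt (fun w => g (f w)) _ z :=
    (hg.restrictScalars ℝ).hasFDerivAt.comp z hf.hasFDerivAt
  simp only [wirtingerDz, hd.fderiv, ContinuousLinearMap.coe_comp, Function.comp_apply,
    fderiv_real_apply_eq_mul_deriv hg]
  ring

theorem wirtingerDz_conj_mul_exp {h : ℂ → ℂ} {v : ℂ → ℝ} (hh : DifferentiableAt ℂ h z)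
    (hv : DifferentiableAt ℝ v z) :
    wirtingerDz (fun w => conj (h w) * (Real.exp (v w) : ℂ)) z
      = conj (h z) * Real.exp (v z) * wirtingerDz (fun w => (v w : ℂ)) z := by
  have hv' : DifferentiableAt ℝ (fun w => (v w : ℂ)) z :=
    Complex.ofRealCLM.differentiableAt.comp z hv
  have hconj : DifferentiableAt ℝ (fun w => conj (h w)) z :=
    Complex.conjCLE.differentiableAt.comp z (hh.restrictScalars ℝ)
  simp only [Complex.ofReal_exp]
  rw [wirtingerDz_mul hconj (by fun_prop), wirtingerDz_conj_comp hh,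
    wirtingerDz_comp Complex.differentiableAt_exp hv', Complex.deriv_exp]
  ring

end Wirtinger

section WeightedShift

variable {ι R : Type*} [DecidableEq ι]

def weightedShift [Add ι] [Zero R] (s : ι) (c : ι → R) : Matrix ι ι R :=
  Matrix.of fun i j => if j = i + s then c i else 0

theorem weightedShift_mul_weightedShift [AddSemigroup ι] [Fintype ι]
    [NonUnitalNonAssocSemiring R] (s t : ι) (c d : ι → R) :
    weightedShift s c * weightedShift t d = weightedShift (s + t) fun i => c i * d (i + s) := by
  ext i j
  simp only [Matrix.mul_apply, weightedShift, Matrix.of_apply, ite_mul, zero_mul]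
  rw [Finset.sum_ite_eq']
  simp [add_assoc, mul_ite]

theorem weightedShift_zero [AddZeroClass ι] [Zero R] (c : ι → R) :
    weightedShift 0 c = Matrix.diagonal c := by
  ext i j
  simp [weightedShift, Matrix.diagonal_apply, eq_comm]

theorem weightedShift_neg_mul_sub [AddGroup ι] [Fintype ι] [Ring R] (s : ι) (c d : ι → R) :
    weightedShift (-s) c * weightedShift s d - weightedShift s d * weightedShift (-s) c
      = Matrix.diagonal fun i => c i * d (i - s) - d i * c (i + s) := by
  rw [weightedShift_mul_weightedShift, weightedShift_mul_weightedShift, neg_add_cancel,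
    add_neg_cancel, weightedShift_zero, weightedShift_zero, Matrix.diagonal_sub]
  simp only [sub_eq_add_neg]

end WeightedShift

theorem Fin.add_one_eq_iff {n : ℕ} (i j : Fin (n + 1)) :
    i + 1 = j ↔ (j : ℕ) = i + 1 ∨ (i : ℕ) = n ∧ (j : ℕ) = 0 := by
  rw [Fin.ext_iff, Fin.val_add_one]
  split_ifs with h
  · subst h; have := j.isLt; simp only [Fin.val_last, true_and]; omega
  · have := Fin.val_lt_last h; omega

theorem Fin.add_one_eq_zero_iff {n : ℕ} (i : Fin (n + 1)) : i + 1 = 0 ↔ i = Fin.last n := by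
  rw [add_eq_zero_iff_eq_neg, Fin.ext_iff, Fin.ext_iff, Fin.coe_neg_one, Fin.val_last]

theorem inv_norm_sq_mul_mul_conj {z : ℂ} (hz : z ≠ 0) (a : ℂ) :
    ((‖z‖ : ℂ) ^ 2)⁻¹ * (z * (conj z * a)) = a := by
  rw [← Complex.mul_conj', ← mul_assoc z,
    inv_mul_cancel_left₀ (mul_ne_zero hz ((map_ne_zero conj).mpr hz))]

section Toda

variable {n : ℕ} {u : Fin (n + 1) → ℂ → ℝ} {z lam : ℂ}

def cWeight (n : ℕ) (z : ℂ) (i : Fin (n + 1)) : ℂ :=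
  if i = 0 then z else 1

noncomputable def fWeight (n : ℕ) (u : Fin (n + 1) → ℂ → ℝ) (z : ℂ) (i : Fin (n + 1)) :
    ℂ :=
  conj (cWeight n z (i + 1)) * (Real.exp (u (i + 1) z - u i z) : ℂ)

theorem differentiable_cWeight (n : ℕ) (i : Fin (n + 1)) :
    Differentiable ℂ fun w => cWeight n w i := by
  unfold cWeight
  split_ifs <;> fun_prop

theorem Cmat_eq_weightedShift (n : ℕ) (z : ℂ) :
    Cmat n z = weightedShift (-1) (cWeight n z) := by
  ext i j
  simp only [Cmat, cWeight, weightedShift, Matrix.of_apply, eq_add_neg_iff_add_eq,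
    Fin.add_one_eq_iff]
  simp only [Fin.ext_iff, Fin.val_zero]
  split_ifs <;> first | rfl | omega

theorem Fmat_eq_weightedShift (n : ℕ) (u : Fin (n + 1) → ℂ → ℝ) (z : ℂ) :
    Fmat n u z = weightedShift 1 (fWeight n u z) := by
  ext i j
  simp only [weightedShift, fWeight, cWeight, Fin.add_one_eq_zero_iff, apply_ite conj, map_one,
    Matrix.of_apply, eq_comm (a := j)]
  by_cases h : i + 1 = j
  · subst h
    rcases eq_or_ne i (Fin.last n) with rfl | hi
    · simp [Fmat]
    · simp [Fmat, Fin.val_add_one_of_lt (Fin.lt_last_iff_ne_last.2 hi), hi]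
  · obtain ⟨h₁, h₂⟩ := not_or.mp ((Fin.add_one_eq_iff i j).not.mp h)
    simp only [Fmat, Matrix.of_apply, if_neg h, if_neg h₁, if_neg h₂]

theorem Cmat_mul_Fmat_sub (n : ℕ) (u : Fin (n + 1) → ℂ → ℝ) (z : ℂ) :
    Cmat n z * Fmat n u z - Fmat n u z * Cmat n z = Matrix.diagonal fun i =>
      cWeight n z i * fWeight n u z (i - 1) - fWeight n u z i * cWeight n z (i + 1) := by
  rw [Cmat_eq_weightedShift, Fmat_eq_weightedShift, weightedShift_neg_mul_sub]

theorem differentiable_Cmat_apply (n : ℕ) (i j : Fin (n + 1)) :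
    Differentiable ℂ fun w => Cmat n w i j := by
  simp only [Cmat_eq_weightedShift, weightedShift, Matrix.of_apply]
  split_ifs
  · exact differentiable_cWeight n i
  · fun_prop

theorem Cmat_apply_self (hn : 1 ≤ n) (i : Fin (n + 1)) : Cmat n z i i = 0 := by
  have : (-1 : Fin (n + 1)) ≠ 0 := by
    rw [neg_ne_zero, Ne, Fin.one_eq_zero_iff]; omega
  simp [Cmat_eq_weightedShift, weightedShift, this]

theorem wirtingerDzbar_Pmat_apply (hn : 1 ≤ n) (hz : z ≠ 0) (i j : Fin (n + 1)) :
    wirtingerDzbar (fun w => Pmat n u lam w i j) z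
      = Matrix.diagonal (fun k => uzzbar (u k) z) i j := by
  rcases eq_or_ne i j with rfl | hij
  · simp only [Pmat, Matrix.add_apply, Matrix.diagonal_apply_eq, Matrix.smul_apply,
      Cmat_apply_self hn, smul_zero, add_zero]
    rfl
  · simp only [Pmat, Matrix.add_apply, Matrix.diagonal_apply_ne _ hij, Matrix.smul_apply,
      smul_eq_mul, zero_add]
    exact wirtingerDzbar_eq_zero
      (((differentiableAt_inv hz).const_mul _).mul (differentiable_Cmat_apply n i j _))

theorem wirtingerDz_Qmat_apply (hz : z ≠ 0) (hu : ∀ k, DifferentiableAt ℝ (u k) z)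
    (i j : Fin (n + 1)) :
    wirtingerDz (fun w => Qmat n u lam w i j) z
      = (wirtingerDz (fun w => (u j w : ℂ)) z - wirtingerDz (fun w => (u i w : ℂ)) z)
        * Qmat n u lam z i j := by
  simp only [Qmat, Fmat_eq_weightedShift, Matrix.smul_apply, weightedShift, Matrix.of_apply,
    smul_eq_mul]
  split_ifs with hj
  · subst hj
    have hQ : (fun w => lam * (conj w)⁻¹ * fWeight n u w i) = fun w =>
        conj (conj lam * w⁻¹ * cWeight n w (i + 1))
          * (Real.exp (u (i + 1) w - u i w) : ℂ) := by
      funext w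
      simp only [fWeight, map_mul, map_inv₀, Complex.conj_conj]
      ring
    have hh : DifferentiableAt ℂ (fun w => conj lam * w⁻¹ * cWeight n w (i + 1)) z :=
      ((differentiableAt_inv hz).const_mul _).mul (differentiable_cWeight n _ z)
    have hofReal : ∀ k, DifferentiableAt ℝ (fun w => (u k w : ℂ)) z := fun k =>
      Complex.ofRealCLM.differentiableAt.comp z (hu k)
    rw [hQ, wirtingerDz_conj_mul_exp hh ((hu _).fun_sub (hu i))]
    simp only [Complex.ofReal_sub]
    rw [wirtingerDz_sub (hofReal _) (hofReal i)]
    simp only [fWeight, map_mul, map_inv₀, Complex.conj_conj]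
    ring
  · simp [wirtingerDz_const]

theorem Pmat_mul_Qmat_sub_apply (hlam : lam ≠ 0) (i j : Fin (n + 1)) :
    (Pmat n u lam z * Qmat n u lam z - Qmat n u lam z * Pmat n u lam z) i j
      = (wirtingerDz (fun w => (u i w : ℂ)) z - wirtingerDz (fun w => (u j w : ℂ)) z)
          * Qmat n u lam z i j
        + ((‖z‖ : ℂ) ^ 2)⁻¹ * (Cmat n z * Fmat n u z - Fmat n u z * Cmat n z) i j := by
  simp only [Pmat, Qmat, Matrix.add_mul, Matrix.mul_add, Matrix.smul_mul, Matrix.mul_smul,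
    Matrix.sub_apply, Matrix.add_apply, Matrix.smul_apply, Matrix.diagonal_mul,
    Matrix.mul_diagonal, smul_eq_mul, ← Complex.mul_conj', mul_inv]
  field_simp
  ring


noncomputable def todaRhs (n : ℕ) (u : Fin (n + 1) → ℂ → ℝ) (z : ℂ) (k : Fin (n + 1)) :
    ℂ :=
  ((‖z‖ : ℂ) ^ 2)⁻¹
    * (cWeight n z k * fWeight n u z (k - 1) - fWeight n u z k * cWeight n z (k + 1))

theorem curvature_apply (hn : 1 ≤ n) (hz : z ≠ 0) (hlam : lam ≠ 0)
    (hu : ∀ k, DifferentiableAt ℝ (u k) z) (i j : Fin (n + 1)) :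
    wirtingerDz (fun w => Qmat n u lam w i j) z
        - wirtingerDzbar (fun w => Pmat n u lam w i j) z
        + (Pmat n u lam z * Qmat n u lam z - Qmat n u lam z * Pmat n u lam z) i j
      = Matrix.diagonal (fun k => todaRhs n u z k - uzzbar (u k) z) i j := by
  rw [wirtingerDz_Qmat_apply hz hu, wirtingerDzbar_Pmat_apply hn hz,
    Pmat_mul_Qmat_sub_apply hlam, Cmat_mul_Fmat_sub]
  rcases eq_or_ne i j with rfl | hij
  · simp only [Matrix.diagonal_apply_eq, todaRhs]
    ring
  · simp only [Matrix.diagonal_apply_ne _ hij]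
    ring

theorem curvature_eq_zero_iff (hn : 1 ≤ n) (hz : z ≠ 0) (hlam : lam ≠ 0)
    (hu : ∀ k, DifferentiableAt ℝ (u k) z) :
    (∀ i j : Fin (n + 1),
        wirtingerDz (fun w => Qmat n u lam w i j) z
          - wirtingerDzbar (fun w => Pmat n u lam w i j) z
          + (Pmat n u lam z * Qmat n u lam z - Qmat n u lam z * Pmat n u lam z) i j = 0)
      ↔ ∀ k, uzzbar (u k) z = todaRhs n u z k := by
  simp only [curvature_apply hn hz hlam hu]
  simp [Matrix.diagonal_apply, sub_eq_zero, eq_comm]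

theorem todaRhs_zero (hn : 1 ≤ n) (hz : z ≠ 0) :
    todaRhs n u z 0 = (Real.exp (u 0 z - u (Fin.last n) z) : ℂ)
      - ((‖z‖ : ℂ) ^ 2)⁻¹ * (Real.exp (u 1 z - u 0 z) : ℂ) := by
  have hlast : (0 : Fin (n + 1)) - 1 = Fin.last n := by
    rw [zero_sub, ← Fin.add_one_eq_zero_iff, neg_add_cancel]
  have hone : (1 : Fin (n + 1)) ≠ 0 := by rw [Ne, Fin.one_eq_zero_iff]; omega
  simp only [todaRhs, fWeight, cWeight, hlast, Fin.last_add_one, zero_add, if_true, if_neg hone,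
    map_one, one_mul, mul_one, mul_sub, inv_norm_sq_mul_mul_conj hz]

theorem todaRhs_of_ne_zero_of_ne_last {k : Fin (n + 1)} (hk0 : k ≠ 0) (hkl : k ≠ Fin.last n) :
    todaRhs n u z k = ((‖z‖ : ℂ) ^ 2)⁻¹ * (Real.exp (u k z - u (k - 1) z) : ℂ)
      - ((‖z‖ : ℂ) ^ 2)⁻¹ * (Real.exp (u (k + 1) z - u k z) : ℂ) := by
  have hk1 : k + 1 ≠ 0 := by rwa [Ne, Fin.add_one_eq_zero_iff]
  simp only [todaRhs, fWeight, cWeight, sub_add_cancel, if_neg hk0, if_neg hk1, map_one, one_mul,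
    mul_one, mul_sub]

theorem todaRhs_last (hn : 1 ≤ n) (hz : z ≠ 0) :
    todaRhs n u z (Fin.last n) = ((‖z‖ : ℂ) ^ 2)⁻¹
        * (Real.exp (u (Fin.last n) z - u (Fin.last n - 1) z) : ℂ)
      - (Real.exp (u 0 z - u (Fin.last n) z) : ℂ) := by
  have hlast : Fin.last n ≠ 0 := by rw [Ne, Fin.ext_iff, Fin.val_last, Fin.val_zero]; omega
  simp only [todaRhs, fWeight, cWeight, sub_add_cancel, Fin.last_add_one, if_true,
    if_neg hlast, map_one, one_mul, mul_sub]
  rw [mul_comm (conj z * _), inv_norm_sq_mul_mul_conj hz]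

theorem forall_eq_todaRhs_iff (hn : 1 ≤ n) (hz : z ≠ 0) (L : Fin (n + 1) → ℂ) :
    (∀ k, L k = todaRhs n u z k)
      ↔ (L 0 = (Real.exp (u 0 z - u (Fin.last n) z) : ℂ)
              - ((‖z‖ : ℂ) ^ 2)⁻¹ * (Real.exp (u 1 z - u 0 z) : ℂ))
        ∧ (∀ j : Fin (n + 1), 1 ≤ (j : ℕ) → (j : ℕ) ≤ n - 1 →
            L j = ((‖z‖ : ℂ) ^ 2)⁻¹ * (Real.exp (u j z - u (j - 1) z) : ℂ)
              - ((‖z‖ : ℂ) ^ 2)⁻¹ * (Real.exp (u (j + 1) z - u j z) : ℂ))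
        ∧ (L (Fin.last n) = ((‖z‖ : ℂ) ^ 2)⁻¹
              * (Real.exp (u (Fin.last n) z - u (Fin.last n - 1) z) : ℂ)
            - (Real.exp (u 0 z - u (Fin.last n) z) : ℂ)) := by
  constructor
  · intro h
    refine ⟨(h 0).trans (todaRhs_zero hn hz),
      fun j hj1 hj2 => (h j).trans (todaRhs_of_ne_zero_of_ne_last ?_ ?_),
      (h _).trans (todaRhs_last hn hz)⟩
    · rw [Ne, Fin.ext_iff, Fin.val_zero]; omega
    · rw [Ne, Fin.ext_iff, Fin.val_last]; omega
  · rintro ⟨h0, hmid, hlast⟩ k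
    rcases eq_or_ne k 0 with rfl | hk0
    · rw [h0, todaRhs_zero hn hz]
    rcases eq_or_ne k (Fin.last n) with rfl | hkl
    · rw [hlast, todaRhs_last hn hz]
    rw [todaRhs_of_ne_zero_of_ne_last hk0 hkl]
    rw [Ne, Fin.ext_iff, Fin.val_zero] at hk0
    rw [Ne, Fin.ext_iff, Fin.val_last] at hkl
    exact hmid k (by omega) (by omega)

end Toda

theorem zero_curvature_iff_ttToda_general (n : ℕ) (hn : 1 ≤ n)
    (u : Fin (n + 1) → ℂ → ℝ)
    (hu : ∀ j, ContDiffOn ℝ 2 (u j) Complex.slitPlane) :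
    (∀ lam : ℂ, ‖lam‖ = 1 → ∀ z ∈ Complex.slitPlane,
        ∀ i j : Fin (n + 1),
          wirtingerDz (fun w => Qmat n u lam w i j) z
            - wirtingerDzbar (fun w => Pmat n u lam w i j) z
            + (Pmat n u lam z * Qmat n u lam z - Qmat n u lam z * Pmat n u lam z) i j
            = 0)
    ↔ (∀ z ∈ Complex.slitPlane,
        (uzzbar (u 0) z
            = (Real.exp (u 0 z - u (Fin.last n) z) : ℂ)
              - ((‖z‖ : ℂ) ^ 2)⁻¹ * (Real.exp (u 1 z - u 0 z) : ℂ))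
        ∧ (∀ j : Fin (n + 1), 1 ≤ (j : ℕ) → (j : ℕ) ≤ n - 1 →
            uzzbar (u j) z
              = ((‖z‖ : ℂ) ^ 2)⁻¹ * (Real.exp (u j z - u (j - 1) z) : ℂ)
                - ((‖z‖ : ℂ) ^ 2)⁻¹ * (Real.exp (u (j + 1) z - u j z) : ℂ))
        ∧ (uzzbar (u (Fin.last n)) z
            = ((‖z‖ : ℂ) ^ 2)⁻¹
                * (Real.exp (u (Fin.last n) z - u (Fin.last n - 1) z) : ℂ)
              - (Real.exp (u 0 z - u (Fin.last n) z) : ℂ))) := by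
  have hdiff : ∀ z ∈ Complex.slitPlane, ∀ k, DifferentiableAt ℝ (u k) z := fun z hz k =>
    ((hu k).contDiffAt (Complex.isOpen_slitPlane.mem_nhds hz)).differentiableAt (by norm_num)
  constructor
  · intro h z hz
    have hz0 := Complex.slitPlane_ne_zero hz
    exact (forall_eq_todaRhs_iff hn hz0 _).mp
      ((curvature_eq_zero_iff hn hz0 one_ne_zero (hdiff z hz)).mp (h 1 norm_one z hz))
  · intro h lam hlam z hz
    have hz0 := Complex.slitPlane_ne_zero hz
    have hlam0 : lam ≠ 0 := norm_ne_zero_iff.mp (by rw [hlam]; exact one_ne_zero)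
    exact (curvature_eq_zero_iff hn hz0 hlam0 (hdiff z hz)).mpr
      ((forall_eq_todaRhs_iff hn hz0 _).mpr (h z hz))

/-- **Proposition 3.2 of the paper.**  For `u_0,…,u_n : ℂ∖(−∞,0] → ℝ` of class
`C²` with `u_j + u_{n−j} = 0`, the zero-curvature equation
`∂_z Q − ∂_{z̄} P + PQ − QP = 0` holds for every `λ` with `|λ| = 1` if and only
if the `u_j` satisfy the tt*-Toda system. -/
theorem zero_curvature_iff_ttToda (n : ℕ) (hn : 1 ≤ n)
    (u : Fin (n + 1) → ℂ → ℝ)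
    (hu : ∀ j, ContDiffOn ℝ 2 (u j) Complex.slitPlane)
    (hanti : ∀ j, ∀ z ∈ Complex.slitPlane, u j z + u (Fin.rev j) z = 0) :
    (∀ lam : ℂ, ‖lam‖ = 1 → ∀ z ∈ Complex.slitPlane,
        ∀ i j : Fin (n + 1),
          wirtingerDz (fun w => Qmat n u lam w i j) z
            - wirtingerDzbar (fun w => Pmat n u lam w i j) z
            + (Pmat n u lam z * Qmat n u lam z - Qmat n u lam z * Pmat n u lam z) i j
            = 0)
    ↔ (∀ z ∈ Complex.slitPlane,
        (uzzbar (u 0) z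
            = (Real.exp (u 0 z - u (Fin.last n) z) : ℂ)
              - ((‖z‖ : ℂ) ^ 2)⁻¹ * (Real.exp (u 1 z - u 0 z) : ℂ))
        ∧ (∀ j : Fin (n + 1), 1 ≤ (j : ℕ) → (j : ℕ) ≤ n - 1 →
            uzzbar (u j) z
              = ((‖z‖ : ℂ) ^ 2)⁻¹ * (Real.exp (u j z - u (j - 1) z) : ℂ)
                - ((‖z‖ : ℂ) ^ 2)⁻¹ * (Real.exp (u (j + 1) z - u j z) : ℂ))
        ∧ (uzzbar (u (Fin.last n)) z
            = ((‖z‖ : ℂ) ^ 2)⁻¹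
                * (Real.exp (u (Fin.last n) z - u (Fin.last n - 1) z) : ℂ)
              - (Real.exp (u 0 z - u (Fin.last n) z) : ℂ))) :=
  zero_curvature_iff_ttToda_general n hn u hu
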